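/- arXiv:1301.0967 — 16 statements merged into one kernel-verified Lean document; each statement's English description precedes it below -/
import Mathlib

section
/- Let (u_i)_{i∈ℤ} be a real sequence such that the family (|u_{i+1} − u_i|)_{i∈ℤ} is summable, and let (C_i)_{i∈ℤ}, (D_i)_{i∈ℤ} be real sequences with C_i ≥ 0, D_i ≥ 0 and C_i + D_i ≤ 1 for all i ∈ ℤ. Define v_i = u_i − C_{i−1}(u_i − u_{i−1}) + D_i(u_{i+1} − u_i). Then the family (|v_{i+1} − v_i|)_{i∈ℤ} is summable and ∑_{i∈ℤ} |v_{i+1} − v_i| ≤ ∑_{i∈ℤ} |u_{i+1} − u_i| (Harten's TVD theorem, valid on any 1D grid since the definition of total variation is independent of cell sizes). -/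
/-!
Writing `Δw i = w (i + 1) - w i`, the scheme gives
`Δv i = (1 - C i - D i) Δu i + C (i - 1) Δu (i - 1) + D (i + 1) Δu (i + 1)`,
with nonnegative coefficients. So `|Δv i|` is bounded by a sum of translates of the three
nonnegative sequences `(1 - C - D) |Δu|`, `C |Δu|`, `D |Δu|`, which add up to `|Δu|`;
translation does not change an infinite sum, hence `∑ |Δv| ≤ ∑ |Δu|`.
-/

theorem summable_and_tsum_le_of_le_translates {G : Type*} [AddGroup G] {a b f g h : G → ℝ}
    (s t : G) (ha : Summable a) (hf : ∀ i, 0 ≤ f i) (hg : ∀ i, 0 ≤ g i) (hh : ∀ i, 0 ≤ h i)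
    (hfgh : ∀ i, f i + g i + h i ≤ a i) (hb₀ : ∀ i, 0 ≤ b i)
    (hb : ∀ i, b i ≤ f i + g (i + s) + h (i + t)) :
    Summable b ∧ ∑' i, b i ≤ ∑' i, a i := by
  have hfs : Summable f :=
    ha.of_nonneg_of_le hf fun i => by linarith [hfgh i, hg i, hh i]
  have hgs : Summable g :=
    ha.of_nonneg_of_le hg fun i => by linarith [hfgh i, hf i, hh i]
  have hhs : Summable h :=
    ha.of_nonneg_of_le hh fun i => by linarith [hfgh i, hf i, hg i]
  have hgs' : Summable fun i => g (i + s) := (Equiv.addRight s).summable_iff.mpr hgs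
  have hhs' : Summable fun i => h (i + t) := (Equiv.addRight t).summable_iff.mpr hhs
  have hdom : Summable fun i => f i + g (i + s) + h (i + t) := (hfs.add hgs').add hhs'
  have hbs : Summable b := hdom.of_nonneg_of_le hb₀ hb
  refine ⟨hbs, ?_⟩
  calc ∑' i, b i ≤ ∑' i, (f i + g (i + s) + h (i + t)) := hbs.tsum_le_tsum hb hdom
    _ = ∑' i, f i + ∑' i, g i + ∑' i, h i := by
      rw [(hfs.add hgs').tsum_add hhs', hfs.tsum_add hgs', (Equiv.addRight s).tsum_eq g |>.symm,
        (Equiv.addRight t).tsum_eq h |>.symm]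
      rfl
    _ = ∑' i, (f i + g i + h i) := by rw [(hfs.add hgs).tsum_add hhs, hfs.tsum_add hgs]
    _ ≤ ∑' i, a i := (hfs.add hgs).add hhs |>.tsum_le_tsum hfgh ha

section Harten

variable {u C D v : ℤ → ℝ}

theorem harten_increment_eq
    (hv : ∀ i : ℤ, v i = u i - C (i - 1) * (u i - u (i - 1)) + D i * (u (i + 1) - u i))
    (i : ℤ) :
    v (i + 1) - v i = (1 - C i - D i) * (u (i + 1) - u i) + C (i - 1) * (u i - u (i - 1))
      + D (i + 1) * (u (i + 1 + 1) - u (i + 1)) := by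
  rw [hv (i + 1), hv i, add_sub_cancel_right]
  ring

theorem abs_harten_increment_le (hC : ∀ i : ℤ, 0 ≤ C i) (hD : ∀ i : ℤ, 0 ≤ D i)
    (hCD : ∀ i : ℤ, C i + D i ≤ 1)
    (hv : ∀ i : ℤ, v i = u i - C (i - 1) * (u i - u (i - 1)) + D i * (u (i + 1) - u i))
    (i : ℤ) :
    |v (i + 1) - v i| ≤ (1 - C i - D i) * |u (i + 1) - u i| + C (i - 1) * |u i - u (i - 1)|
      + D (i + 1) * |u (i + 1 + 1) - u (i + 1)| := by
  have hCD' : 0 ≤ 1 - C i - D i := by linarith [hCD i]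
  rw [harten_increment_eq hv]
  calc _ ≤ |(1 - C i - D i) * (u (i + 1) - u i)| + |C (i - 1) * (u i - u (i - 1))|
        + |D (i + 1) * (u (i + 1 + 1) - u (i + 1))| := abs_add_three _ _ _
    _ = _ := by
      rw [abs_mul, abs_mul, abs_mul, abs_of_nonneg hCD', abs_of_nonneg (hC _),
        abs_of_nonneg (hD _)]

end Harten

/-- Harten's TVD theorem on an arbitrary 1D grid: if `v i = u i - C (i-1) * (u i - u (i-1))
    + D i * (u (i+1) - u i)` with `C i ≥ 0`, `D i ≥ 0`, `C i + D i ≤ 1`, then the total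
    variation of `v` is at most that of `u`. -/
theorem harten_tvd (u C D v : ℤ → ℝ)
    (hu : Summable (fun i : ℤ => |u (i + 1) - u i|))
    (hC : ∀ i : ℤ, 0 ≤ C i) (hD : ∀ i : ℤ, 0 ≤ D i)
    (hCD : ∀ i : ℤ, C i + D i ≤ 1)
    (hv : ∀ i : ℤ, v i = u i - C (i - 1) * (u i - u (i - 1)) + D i * (u (i + 1) - u i)) :
    Summable (fun i : ℤ => |v (i + 1) - v i|) ∧
      (∑' i : ℤ, |v (i + 1) - v i|) ≤ ∑' i : ℤ, |u (i + 1) - u i| := by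
  refine summable_and_tsum_le_of_le_translates (-1) 1 hu
    (f := fun i => (1 - C i - D i) * |u (i + 1) - u i|)
    (g := fun i => C i * |u (i + 1) - u i|) (h := fun i => D i * |u (i + 1) - u i|)
    (fun i => mul_nonneg (by linarith [hCD i]) (abs_nonneg _))
    (fun i => mul_nonneg (hC i) (abs_nonneg _)) (fun i => mul_nonneg (hD i) (abs_nonneg _))
    (fun i => le_of_eq (by ring)) (fun i => abs_nonneg _) fun i => ?_
  simpa only [← sub_eq_add_neg, sub_add_cancel] using abs_harten_increment_le hC hD hCD hv i
end

section
/- For all real numbers λ, μ, a, b with 0 ≤ λ ≤ 1, 0 ≤ μ ≤ 1, 0 ≤ a ≤ 2 and 0 ≤ b ≤ 2, one has 0 ≤ λ + (1/2)·λ·(1−λ)·a − (1/2)·λ·(1−μ)·b ≤ 1. -/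
/-!
Both limiter terms are products `(1/2) t φ` with `t ≥ 0` and `0 ≤ φ ≤ 2`, hence lie in `[0, t]`.
Bounding the `(1 - μ)` term by `λ(1 - μ)` leaves at least `λμ ≥ 0`; bounding the `(1 - λ)` term
by `λ(1 - λ)` leaves at most `λ(2 - λ) = 1 - (1 - λ)² ≤ 1`.
-/

lemma half_mul_mul_le_self {t φ : ℝ} (ht : 0 ≤ t) (hφ : φ ≤ 2) : 1 / 2 * t * φ ≤ t := by
  linarith [mul_le_mul_of_nonneg_left hφ ht]

/-- The Harten coefficient bound: for Courant numbers `λ, μ ∈ [0,1]` and limiter values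
    `a, b ∈ [0,2]`, one has `0 ≤ λ + (1/2)λ(1-λ)a - (1/2)λ(1-μ)b ≤ 1`. -/
theorem harten_coefficient_bound (lam mu a b : ℝ)
    (hlam0 : 0 ≤ lam) (hlam1 : lam ≤ 1) (hmu0 : 0 ≤ mu) (hmu1 : mu ≤ 1)
    (ha0 : 0 ≤ a) (ha2 : a ≤ 2) (hb0 : 0 ≤ b) (hb2 : b ≤ 2) :
    0 ≤ lam + (1 / 2) * lam * (1 - lam) * a - (1 / 2) * lam * (1 - mu) * b ∧
      lam + (1 / 2) * lam * (1 - lam) * a - (1 / 2) * lam * (1 - mu) * b ≤ 1 := by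
  have hlam : 0 ≤ lam * (1 - lam) := mul_nonneg hlam0 (sub_nonneg.2 hlam1)
  have hlam_mu : 0 ≤ lam * (1 - mu) := mul_nonneg hlam0 (sub_nonneg.2 hmu1)
  have ha_le := half_mul_mul_le_self hlam ha2
  have hb_le := half_mul_mul_le_self hlam_mu hb2
  have ha_nonneg : 0 ≤ 1 / 2 * (lam * (1 - lam)) * a := by positivity
  have hb_nonneg : 0 ≤ 1 / 2 * (lam * (1 - mu)) * b := by positivity
  constructor
  · linarith [mul_nonneg hlam0 hmu0]
  · linarith [sq_nonneg (1 - lam)]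
end

section
/- Let c > 0 and Δt > 0 be reals, let (Δx_i)_{i∈ℤ} be positive reals such that λ_i := c·Δt/Δx_i ≤ 1 for all i. Let (u_i)_{i∈ℤ} be a real sequence with (|u_{i+1} − u_i|)_{i∈ℤ} summable, and let (σ_i)_{i∈ℤ} be reals such that for every i there exist a_i, b_i ∈ [0, 2] with Δx_i·σ_i = a_i·(u_{i+1} − u_i) and Δx_i·σ_i = b_i·(u_i − u_{i−1}). Define v_i = u_i − λ_i(u_i − u_{i−1}) − (1/2)λ_i[(1−λ_i)·Δx_i·σ_i − (1−λ_{i−1})·Δx_{i−1}·σ_{i−1}]. Then (|v_{i+1} − v_i|)_{i∈ℤ} is summable and ∑_{i∈ℤ} |v_{i+1} − v_i| ≤ ∑_{i∈ℤ} |u_{i+1} − u_i|; i.e., the MUSCL/REP update on the non-uniform grid is total-variation-diminishing. -/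
/-!
Harten's argument. Using the limiter identities `Δx_i σ_i = b_i (u_i - u_{i-1})` and
`Δx_{i-1} σ_{i-1} = a_{i-1} (u_i - u_{i-1})`, the update takes the incremental form
`v_i = u_i - C_i (u_i - u_{i-1})` with `C_i = λ_i (1 + ½(1-λ_i) b_i - ½(1-λ_{i-1}) a_{i-1})`,
and the CFL condition with `a, b ∈ [0,2]` gives `0 ≤ C_i ≤ 1`. Then
`v_{i+1} - v_i = (1 - C_{i+1}) Δu_i + C_i Δu_{i-1}` is a combination with nonnegative weights,
and after summing, the weights `C_{i+1}` attached to `|Δu_i|` cancel by a shift of index.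
-/

theorem Summable.comp_int_add_one {M : Type*} [AddCommMonoid M] [TopologicalSpace M]
    {g : ℤ → M} (hg : Summable g) :
    Summable (fun i => g (i + 1)) :=
  (Equiv.addRight (1 : ℤ)).summable_iff.mpr hg

theorem Summable.tsum_int_add_one_sub {G : Type*} [AddCommGroup G] [TopologicalSpace G]
    [IsTopologicalAddGroup G] [T2Space G] {g : ℤ → G} (hg : Summable g) :
    ∑' i, (g (i + 1) - g i) = 0 := by
  rw [hg.comp_int_add_one.tsum_sub hg, sub_eq_zero]
  exact (Equiv.addRight (1 : ℤ)).tsum_eq g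

section Harten

variable {u C w : ℤ → ℝ}

theorem sub_eq_of_incremental (hw : ∀ i, w i = u i - C i * (u i - u (i - 1))) (i : ℤ) :
    w (i + 1) - w i = (1 - C (i + 1)) * (u (i + 1) - u i) + C i * (u i - u (i - 1)) := by
  rw [hw, hw, add_sub_cancel_right]
  ring

-- Written with `i + 1 - 1` so that the correction is literally `g (i + 1) - g i`
-- for `g i = C i * |u i - u (i - 1)|`, which telescopes.
theorem abs_sub_le_of_incremental (hC : ∀ i, C i ∈ Set.Icc (0 : ℝ) 1)
    (hw : ∀ i, w i = u i - C i * (u i - u (i - 1))) (i : ℤ) :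
    |w (i + 1) - w i| ≤ |u (i + 1) - u i|
      - (C (i + 1) * |u (i + 1) - u (i + 1 - 1)| - C i * |u i - u (i - 1)|) := by
  obtain ⟨hC0, -⟩ := hC i
  obtain ⟨-, hC1⟩ := hC (i + 1)
  calc |w (i + 1) - w i|
      ≤ |(1 - C (i + 1)) * (u (i + 1) - u i)| + |C i * (u i - u (i - 1))| := by
        rw [sub_eq_of_incremental hw]
        exact abs_add_le _ _
    _ = _ := by
        rw [abs_mul, abs_mul, abs_of_nonneg (sub_nonneg.mpr hC1), abs_of_nonneg hC0,
          add_sub_cancel_right]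
        ring

/-- Harten's lemma. -/
theorem tvd_of_incremental (hC : ∀ i, C i ∈ Set.Icc (0 : ℝ) 1)
    (hw : ∀ i, w i = u i - C i * (u i - u (i - 1)))
    (hu : Summable (fun i => |u (i + 1) - u i|)) :
    Summable (fun i => |w (i + 1) - w i|) ∧
      ∑' i, |w (i + 1) - w i| ≤ ∑' i, |u (i + 1) - u i| := by
  set g : ℤ → ℝ := fun i => C i * |u i - u (i - 1)|
  have hu' : Summable (fun i => |u i - u (i - 1)|) := by
    simpa [Function.comp_def] using (Equiv.subRight (1 : ℤ)).summable_iff.mpr hu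
  have hg : Summable g :=
    hu'.of_nonneg_of_le (fun i => mul_nonneg (hC i).1 (abs_nonneg _))
      (fun i => mul_le_of_le_one_left (abs_nonneg _) (hC i).2)
  have hbound : Summable (fun i => |u (i + 1) - u i| - (g (i + 1) - g i)) :=
    hu.sub (hg.comp_int_add_one.sub hg)
  have hw' : Summable (fun i => |w (i + 1) - w i|) :=
    hbound.of_nonneg_of_le (fun _ => abs_nonneg _) (abs_sub_le_of_incremental hC hw)
  refine ⟨hw', ?_⟩
  calc ∑' i, |w (i + 1) - w i|
      ≤ ∑' i, (|u (i + 1) - u i| - (g (i + 1) - g i)) :=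
        hw'.tsum_le_tsum (abs_sub_le_of_incremental hC hw) hbound
    _ = ∑' i, |u (i + 1) - u i| := by
        rw [hu.tsum_sub (hg.comp_int_add_one.sub hg),
          hg.tsum_int_add_one_sub, sub_zero]

end Harten

theorem incremental_coeff_mem_Icc {l l' a b : ℝ} (hl : l ∈ Set.Icc (0 : ℝ) 1)
    (hl' : l' ∈ Set.Icc (0 : ℝ) 1) (ha : a ∈ Set.Icc (0 : ℝ) 2) (hb : b ∈ Set.Icc (0 : ℝ) 2) :
    l * (1 + 1 / 2 * (1 - l) * b - 1 / 2 * (1 - l') * a) ∈ Set.Icc (0 : ℝ) 1 := by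
  obtain ⟨hl0, hl1⟩ := hl
  obtain ⟨hl'0, hl'1⟩ := hl'
  obtain ⟨ha0, ha2⟩ := ha
  obtain ⟨hb0, hb2⟩ := hb
  have hlb : 0 ≤ (1 - l) * b := mul_nonneg (sub_nonneg.mpr hl1) hb0
  have hl'a : 0 ≤ (1 - l') * a := mul_nonneg (sub_nonneg.mpr hl'1) ha0
  constructor
  · apply mul_nonneg hl0
    nlinarith
  · nlinarith [sq_nonneg (1 - l), mul_nonneg hl0 hl'a]

/-- The MUSCL/REP update for `u_t + c u_x = 0` (`c > 0`) on a non-uniform grid,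
    with limited slopes satisfying the TVD limiter conditions, is total-variation
    diminishing. -/
theorem muscl_rep_tvd (c dt : ℝ) (hc : 0 < c) (hdt : 0 < dt)
    (dx : ℤ → ℝ) (hdx : ∀ i : ℤ, 0 < dx i)
    (hcfl : ∀ i : ℤ, c * dt / dx i ≤ 1)
    (u σ : ℤ → ℝ) (hu : Summable (fun i : ℤ => |u (i + 1) - u i|))
    (hσ : ∀ i : ℤ, ∃ a b : ℝ, 0 ≤ a ∧ a ≤ 2 ∧ 0 ≤ b ∧ b ≤ 2 ∧
      dx i * σ i = a * (u (i + 1) - u i) ∧ dx i * σ i = b * (u i - u (i - 1)))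
    (v : ℤ → ℝ)
    (hv : ∀ i : ℤ, v i = u i - (c * dt / dx i) * (u i - u (i - 1)) -
      (1 / 2) * (c * dt / dx i) *
        ((1 - c * dt / dx i) * dx i * σ i -
         (1 - c * dt / dx (i - 1)) * dx (i - 1) * σ (i - 1))) :
    Summable (fun i : ℤ => |v (i + 1) - v i|) ∧
      (∑' i : ℤ, |v (i + 1) - v i|) ≤ ∑' i : ℤ, |u (i + 1) - u i| := by
  choose a b ha0 ha2 hb0 hb2 hslope_right hslope_left using hσ
  set l : ℤ → ℝ := fun i => c * dt / dx i
  have hl : ∀ i, l i ∈ Set.Icc (0 : ℝ) 1 :=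
    fun i => ⟨(div_pos (mul_pos hc hdt) (hdx i)).le, hcfl i⟩
  apply tvd_of_incremental (C := fun i => l i * (1 + 1 / 2 * (1 - l i) * b i
    - 1 / 2 * (1 - l (i - 1)) * a (i - 1))) _ _ hu
  · exact fun i => incremental_coeff_mem_Icc (hl i) (hl (i - 1))
      ⟨ha0 (i - 1), ha2 (i - 1)⟩ ⟨hb0 i, hb2 i⟩
  · intro i
    have hprev := hslope_right (i - 1)
    rw [sub_add_cancel] at hprev
    rw [hv i]
    linear_combination (-(1 / 2 * l i * (1 - l i))) * hslope_left i
      + (1 / 2 * l i * (1 - l (i - 1))) * hprev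
end

section
/- Let x₀ < x₁ < x₂ be reals; set Δ₁ = x₁ − x₀, Δ₂ = x₂ − x₁, m₁ = (x₀ + x₁)/2, m₂ = (x₁ + x₂)/2. Let u₁, u₂, σ₁, σ₂ be reals and let f : ℝ → ℝ satisfy f(x) = u₁ + σ₁(x − m₁) for x ∈ [x₀, x₁) and f(x) = u₂ + σ₂(x − m₂) for x ∈ [x₁, x₂]. Let s be a real with 0 ≤ s ≤ min(Δ₁, Δ₂), and put λ = s/Δ₂, μ = s/Δ₁. Then (1/Δ₂)·∫_{x₁}^{x₂} f(x − s) dx = u₂ − λ(u₂ − u₁) − (1/2)·λ·[(1 − λ)·Δ₂·σ₂ − (1 − μ)·Δ₁·σ₁]. -/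
/-!
Shifting by `s` turns the new cell average into the average of `f` over `[x₁ - s, x₂ - s]`.
This interval meets the left cell in `[x₁ - s, x₁]` and the right cell in `[x₁, x₂ - s]`, where
`f` is affine, and the integral of an affine function is the length of the interval times the
value at its midpoint; the update formula is then an algebraic identity.
-/

open intervalIntegral Set

theorem integral_affine (a b c p q : ℝ) :
    ∫ x in p..q, (a + b * (x - c)) = (q - p) * (a + b * ((p + q) / 2 - c)) := by
  rw [integral_add intervalIntegrable_const
    ((by fun_prop : Continuous fun x : ℝ => b * (x - c)).intervalIntegrable p q),
    integral_const_mul, integral_comp_sub_right (fun x => x)]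
  simp only [integral_const, integral_id, smul_eq_mul]
  ring

theorem integral_eq_of_eqOn_Ioo_affine {f : ℝ → ℝ} {a b c p q : ℝ} (hpq : p ≤ q)
    (hf : EqOn f (fun x => a + b * (x - c)) (Ioo p q)) :
    IntervalIntegrable f MeasureTheory.volume p q ∧
      ∫ x in p..q, f x = (q - p) * (a + b * ((p + q) / 2 - c)) := by
  rw [← uIoo_of_le hpq] at hf
  refine ⟨?_, (integral_congr_uIoo hf).trans (integral_affine a b c p q)⟩
  exact (Continuous.intervalIntegrable (by fun_prop) p q).congr_uIoo hf.symm

/-- The exact reconstruct–evolve–project (REP) formula: the new cell average over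
    `[x₁, x₂]` of the shifted piecewise-linear reconstruction equals the MUSCL update. -/
theorem rep_exact_update (x₀ x₁ x₂ : ℝ) (h01 : x₀ < x₁) (h12 : x₁ < x₂)
    (u₁ u₂ σ₁ σ₂ s : ℝ) (f : ℝ → ℝ)
    (hf₁ : ∀ x : ℝ, x₀ ≤ x → x < x₁ → f x = u₁ + σ₁ * (x - (x₀ + x₁) / 2))
    (hf₂ : ∀ x : ℝ, x₁ ≤ x → x ≤ x₂ → f x = u₂ + σ₂ * (x - (x₁ + x₂) / 2))
    (hs0 : 0 ≤ s) (hs : s ≤ min (x₁ - x₀) (x₂ - x₁)) :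
    (1 / (x₂ - x₁)) * ∫ x in x₁..x₂, f (x - s) =
      u₂ - (s / (x₂ - x₁)) * (u₂ - u₁) -
        (1 / 2) * (s / (x₂ - x₁)) *
          ((1 - s / (x₂ - x₁)) * (x₂ - x₁) * σ₂ -
           (1 - s / (x₁ - x₀)) * (x₁ - x₀) * σ₁) := by
  have hs₁ : s ≤ x₁ - x₀ := hs.trans (min_le_left _ _)
  have hs₂ : s ≤ x₂ - x₁ := hs.trans (min_le_right _ _)
  obtain ⟨hint₁, hleft⟩ := integral_eq_of_eqOn_Ioo_affine (f := f) (p := x₁ - s) (q := x₁)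
    (by linarith) fun x hx => hf₁ x (by linarith [hx.1]) hx.2
  obtain ⟨hint₂, hright⟩ := integral_eq_of_eqOn_Ioo_affine (f := f) (p := x₁) (q := x₂ - s)
    (by linarith) fun x hx => hf₂ x hx.1.le (by linarith [hx.2])
  rw [integral_comp_sub_right, ← integral_add_adjacent_intervals hint₁ hint₂, hleft, hright]
  have hΔ₁ : x₁ - x₀ ≠ 0 := by linarith
  have hΔ₂ : x₂ - x₁ ≠ 0 := by linarith
  field_simp
  ring
end

section
/- Let A, B be reals with 0 < B < min(2, 2A), and define the enhanced minmod limiter φ(θ) = max(0, (B/A)·min(θ, A)). Then: (i) φ(A) = B; (ii) φ(θ) = 0 for all θ ≤ 0; (iii) 0 ≤ φ(θ) ≤ 2 for all θ; and (iv) φ(θ) ≤ 2θ for all θ > 0. -/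
/-!
The limiter is the ramp `θ ↦ c · min θ A` with slope `c = B / A`, cut off below at `0`.
Since `0 < B < 2A`, the slope lies in `(0, 2)`, so the ramp stays below `2θ`, and its plateau
value `c · A = B` is below `2`.
-/

section ClippedRamp

variable {α : Type*} [Semiring α] [LinearOrder α] [IsOrderedRing α] {c θ a M : α}

theorem max_zero_mul_min_eq_zero_of_nonpos (hc : 0 ≤ c) (hθ : θ ≤ 0) :
    max 0 (c * min θ a) = 0 :=
  max_eq_left (mul_nonpos_of_nonneg_of_nonpos hc ((min_le_left θ a).trans hθ))

theorem max_zero_mul_min_le_of_mul_le (hc : 0 ≤ c) (hM : 0 ≤ M) (hca : c * a ≤ M) :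
    max 0 (c * min θ a) ≤ M :=
  max_le hM ((mul_le_mul_of_nonneg_left (min_le_right θ a) hc).trans hca)

theorem max_zero_mul_min_le_mul_left (hc : 0 ≤ c) (hθ : 0 ≤ θ) :
    max 0 (c * min θ a) ≤ c * θ :=
  max_le (mul_nonneg hc hθ) (mul_le_mul_of_nonneg_left (min_le_left θ a) hc)

end ClippedRamp

/-- The enhanced minmod limiter `φ(θ) = max(0, (B/A)·min(θ, A))` satisfies the
    second-order condition `φ(A) = B` and the TVD conditions. -/
theorem enhanced_minmod_properties (A B : ℝ) (hB0 : 0 < B) (hB : B < min 2 (2 * A)) :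
    (max 0 ((B / A) * min A A) = B) ∧
      (∀ θ : ℝ, θ ≤ 0 → max 0 ((B / A) * min θ A) = 0) ∧
      (∀ θ : ℝ, 0 ≤ max 0 ((B / A) * min θ A) ∧ max 0 ((B / A) * min θ A) ≤ 2) ∧
      (∀ θ : ℝ, 0 < θ → max 0 ((B / A) * min θ A) ≤ 2 * θ) := by
  obtain ⟨hB2, hB2A⟩ := lt_min_iff.mp hB
  have hA : 0 < A := by linarith
  have hplateau : B / A * A = B := div_mul_cancel₀ B hA.ne'
  have hslope : 0 ≤ B / A := (div_pos hB0 hA).le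
  have hslope_le : B / A ≤ 2 := (div_le_iff₀ hA).mpr hB2A.le
  refine ⟨?_, fun θ hθ ↦ max_zero_mul_min_eq_zero_of_nonpos hslope hθ,
    fun θ ↦ ⟨le_max_left _ _, ?_⟩, fun θ hθ ↦ ?_⟩
  · rw [min_self, hplateau, max_eq_right hB0.le]
  · exact max_zero_mul_min_le_of_mul_le hslope zero_le_two (hplateau.trans_le hB2.le)
  · exact (max_zero_mul_min_le_mul_left hslope hθ.le).trans
      (mul_le_mul_of_nonneg_right hslope_le hθ.le)
end

section
/- Let A, B be reals with 0 < B < min(2, 2A), and define φ_{A,B}(θ) = max(0, (B/A)·min(θ, A)). Then for every real θ ≠ 0, φ_{A,B}(θ)/θ = φ_{1/A, B/A}(1/θ); i.e., the enhanced minmod limiter is symmetry-preserving. -/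
/-!
For `θ < 0` both sides vanish, since `min θ A = θ` and `min θ⁻¹ A⁻¹ = θ⁻¹` are negative.
For `θ > 0` both `max`s are inactive and the identity reduces to
`min θ A / θ = min 1 (A / θ) = A · min θ⁻¹ A⁻¹`.
-/

theorem min_div_self_eq_mul_min_inv {a θ : ℝ} (ha : 0 < a) (hθ : 0 < θ) :
    min θ a / θ = a * min θ⁻¹ a⁻¹ := by
  rw [← min_div_div_right hθ.le, mul_min_of_nonneg _ _ ha.le, div_self hθ.ne',
    mul_inv_cancel₀ ha.ne', min_comm, div_eq_mul_inv]

theorem max_zero_mul_min_div {a c θ : ℝ} (ha : 0 < a) (hc : 0 ≤ c) (hθ : θ ≠ 0) :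
    max 0 (c * min θ a) / θ = max 0 (c * a * min θ⁻¹ a⁻¹) := by
  rcases hθ.lt_or_gt with hneg | hpos
  · have hinv : θ⁻¹ < 0 := inv_lt_zero.mpr hneg
    rw [min_eq_left (hneg.trans ha).le, min_eq_left (hinv.trans (inv_pos.mpr ha)).le,
      max_eq_left (mul_nonpos_of_nonneg_of_nonpos hc hneg.le),
      max_eq_left (mul_nonpos_of_nonneg_of_nonpos (by positivity) hinv.le), zero_div]
  · rw [max_eq_right (by positivity), max_eq_right (by positivity), mul_div_assoc,
      min_div_self_eq_mul_min_inv ha hpos, mul_assoc]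

/-- The enhanced minmod limiter `φ_{A,B}(θ) = max(0, (B/A)·min(θ, A))` is
    symmetry-preserving: `φ_{A,B}(θ)/θ = φ_{1/A, B/A}(1/θ)` for all `θ ≠ 0`. -/
theorem enhanced_minmod_symmetry (A B : ℝ) (hB0 : 0 < B) (hB : B < min 2 (2 * A)) :
    ∀ θ : ℝ, θ ≠ 0 →
      (max 0 ((B / A) * min θ A)) / θ =
        max 0 (((B / A) / (1 / A)) * min (1 / θ) (1 / A)) := by
  intro θ hθ
  have hA : 0 < A := by linarith [min_le_right 2 (2 * A)]
  simp only [one_div, div_inv_eq_mul]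
  exact max_zero_mul_min_div hA (div_pos hB0 hA).le hθ
end

section
/- Let A, B be reals with 0 < B < min(2, 2A), and define the enhanced superbee limiter φ(θ) = max(0, min(2θ, B), min((B/A)·θ, 2)). Then: (i) φ(A) = B; (ii) φ(θ) = 0 for all θ ≤ 0; (iii) 0 ≤ φ(θ) ≤ 2 for all θ; and (iv) φ(θ) ≤ 2θ for all θ > 0. -/
noncomputable def enhancedSuperbee (A B θ : ℝ) : ℝ :=
  max 0 (max (min (2 * θ) B) (min ((B / A) * θ) 2))

namespace enhancedSuperbee

variable {A B : ℝ}

theorem nonneg (θ : ℝ) : 0 ≤ enhancedSuperbee A B θ :=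
  le_max_left _ _

theorem le_two (hB : B ≤ 2) (θ : ℝ) : enhancedSuperbee A B θ ≤ 2 :=
  max_le zero_le_two (max_le ((min_le_right _ _).trans hB) (min_le_right _ _))

theorem eq_zero_of_nonpos (hA : 0 ≤ A) (hB : 0 ≤ B) {θ : ℝ} (hθ : θ ≤ 0) :
    enhancedSuperbee A B θ = 0 := by
  have h_two : 2 * θ ≤ 0 := by linarith
  have h_slope : B / A * θ ≤ 0 := mul_nonpos_of_nonneg_of_nonpos (div_nonneg hB hA) hθ
  exact max_eq_left (max_le ((min_le_left _ _).trans h_two) ((min_le_left _ _).trans h_slope))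

theorem le_two_mul (hA : 0 < A) (hBA : B ≤ 2 * A) {θ : ℝ} (hθ : 0 ≤ θ) :
    enhancedSuperbee A B θ ≤ 2 * θ := by
  have h_slope : B / A ≤ 2 := (div_le_iff₀ hA).mpr (by linarith)
  exact max_le (by linarith) (max_le (min_le_left _ _)
    ((min_le_left _ _).trans (mul_le_mul_of_nonneg_right h_slope hθ)))

theorem apply_self (hA : A ≠ 0) (hB : B ≤ 2) (hBA : B ≤ 2 * A) (hB0 : 0 ≤ B) :
    enhancedSuperbee A B A = B := by
  rw [enhancedSuperbee, div_mul_cancel₀ B hA, min_eq_left hB, min_eq_right hBA, max_self,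
    max_eq_right hB0]

end enhancedSuperbee

/-- The enhanced superbee limiter `φ(θ) = max(0, min(2θ, B), min((B/A)θ, 2))` satisfies
    the second-order condition `φ(A) = B` and the TVD conditions. -/
theorem enhanced_superbee_properties (A B : ℝ) (hB0 : 0 < B) (hB : B < min 2 (2 * A)) :
    (max 0 (max (min (2 * A) B) (min ((B / A) * A) 2)) = B) ∧
      (∀ θ : ℝ, θ ≤ 0 → max 0 (max (min (2 * θ) B) (min ((B / A) * θ) 2)) = 0) ∧
      (∀ θ : ℝ, 0 ≤ max 0 (max (min (2 * θ) B) (min ((B / A) * θ) 2)) ∧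
        max 0 (max (min (2 * θ) B) (min ((B / A) * θ) 2)) ≤ 2) ∧
      (∀ θ : ℝ, 0 < θ → max 0 (max (min (2 * θ) B) (min ((B / A) * θ) 2)) ≤ 2 * θ) := by
  obtain ⟨hB2, hBA⟩ := lt_min_iff.mp hB
  have hA : 0 < A := by linarith
  exact ⟨enhancedSuperbee.apply_self hA.ne' hB2.le hBA.le hB0.le,
    fun θ hθ => enhancedSuperbee.eq_zero_of_nonpos hA.le hB0.le hθ,
    fun θ => ⟨enhancedSuperbee.nonneg θ, enhancedSuperbee.le_two hB2.le θ⟩,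
    fun θ hθ => enhancedSuperbee.le_two_mul hA hBA.le hθ.le⟩
end

section
/- Let A, B be reals with 0 < B < min(2, 2A), and define φ_{A,B}(θ) = max(0, min(2θ, B), min((B/A)·θ, 2)). Then for every real θ ≠ 0, φ_{A,B}(θ)/θ = φ_{1/A, B/A}(1/θ); i.e., the enhanced superbee limiter is symmetry-preserving. -/
/-! Writing the limiter as `max 0 (max (min (a θ) b) (min (c θ) d))`, dividing by `θ > 0` moves
`θ` from the slopes to the plateaus, which is the same kind of limiter in `1/θ` with slopes and
plateaus exchanged; for `θ < 0` and nonnegative parameters both sides vanish. For the enhanced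
superbee limiter `(a, b, c, d) = (2, B, B/A, 2)` the exchange gives `(2, B/A, B, 2)`, the limiter
with parameters `(1/A, B/A)`. -/

def superbeeLike (a b c d θ : ℝ) : ℝ :=
  max 0 (max (min (a * θ) b) (min (c * θ) d))

section superbeeLike

variable {a b c d θ : ℝ}

theorem superbeeLike_of_nonpos (ha : 0 ≤ a) (hc : 0 ≤ c) (hθ : θ ≤ 0) :
    superbeeLike a b c d θ = 0 := by
  have haθ : a * θ ≤ 0 := mul_nonpos_of_nonneg_of_nonpos ha hθ
  have hcθ : c * θ ≤ 0 := mul_nonpos_of_nonneg_of_nonpos hc hθ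
  exact max_eq_left (max_le ((min_le_left _ _).trans haθ) ((min_le_left _ _).trans hcθ))

theorem superbeeLike_div_of_pos (hθ : 0 < θ) :
    superbeeLike a b c d θ / θ = superbeeLike d c b a θ⁻¹ := by
  simp only [superbeeLike, ← max_div_div_right hθ.le, ← min_div_div_right hθ.le, zero_div,
    mul_div_assoc, div_self hθ.ne', mul_one, ← div_eq_mul_inv]
  rw [min_comm a, min_comm c, max_comm (min (b / θ) a)]

theorem superbeeLike_div_eq (ha : 0 ≤ a) (hb : 0 ≤ b) (hc : 0 ≤ c) (hd : 0 ≤ d) (hθ : θ ≠ 0) :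
    superbeeLike a b c d θ / θ = superbeeLike d c b a θ⁻¹ := by
  rcases hθ.lt_or_gt with hneg | hpos
  · rw [superbeeLike_of_nonpos ha hc hneg.le,
      superbeeLike_of_nonpos hd hb (inv_nonpos.mpr hneg.le), zero_div]
  · exact superbeeLike_div_of_pos hpos

end superbeeLike

/-- The enhanced superbee limiter `φ_{A,B}(θ) = max(0, min(2θ, B), min((B/A)θ, 2))` is
    symmetry-preserving: `φ_{A,B}(θ)/θ = φ_{1/A, B/A}(1/θ)` for all `θ ≠ 0`. -/
theorem enhanced_superbee_symmetry (A B : ℝ) (hB0 : 0 < B) (hB : B < min 2 (2 * A)) :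
    ∀ θ : ℝ, θ ≠ 0 →
      (max 0 (max (min (2 * θ) B) (min ((B / A) * θ) 2))) / θ =
        max 0 (max (min (2 * (1 / θ)) (B / A))
          (min (((B / A) / (1 / A)) * (1 / θ)) 2)) := by
  intro θ hθ
  have hA : 0 < A := by linarith [hB.trans_le (min_le_right _ _)]
  have hconj : (B / A) / (1 / A) = B := by field_simp
  rw [hconj, one_div]
  exact superbeeLike_div_eq zero_le_two hB0.le (div_pos hB0 hA).le zero_le_two hθ
end

section
/- Let A, B be reals with 0 < B < min(2, 2A), and define the enhanced monotonized-central (MC) limiter φ(θ) = max(0, min(2θ, (B/(A+1))·(θ+1), 2)). Then: (i) φ(A) = B; (ii) φ(θ) = 0 for all θ ≤ 0; (iii) 0 ≤ φ(θ) ≤ 2 for all θ; and (iv) φ(θ) ≤ 2θ for all θ > 0. -/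
/-- The paper's limiter is `enhancedMC (B / (A + 1))`. -/
def enhancedMC (c θ : ℝ) : ℝ :=
  max 0 (min (2 * θ) (min (c * (θ + 1)) 2))

namespace enhancedMC

variable (c : ℝ)

theorem eq_zero_of_nonpos {θ : ℝ} (hθ : θ ≤ 0) : enhancedMC c θ = 0 :=
  max_eq_left <| (min_le_left _ _).trans (by linarith)

theorem nonneg (θ : ℝ) : 0 ≤ enhancedMC c θ :=
  le_max_left _ _

theorem le_two (θ : ℝ) : enhancedMC c θ ≤ 2 :=
  max_le zero_le_two <| (min_le_right _ _).trans (min_le_right _ _)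

theorem le_two_mul {θ : ℝ} (hθ : 0 < θ) : enhancedMC c θ ≤ 2 * θ :=
  max_le (by linarith) (min_le_left _ _)

theorem eq_of_mul_eq {θ B : ℝ} (hc : c * (θ + 1) = B) (hB0 : 0 ≤ B) (hB : B ≤ min 2 (2 * θ)) :
    enhancedMC c θ = B := by
  rw [enhancedMC, hc, min_eq_left (le_min_iff.mp hB).1, min_eq_right (le_min_iff.mp hB).2,
    max_eq_right hB0]

end enhancedMC

/-- The enhanced MC limiter `φ(θ) = max(0, min(2θ, (B/(A+1))(θ+1), 2))` satisfies the
    second-order condition `φ(A) = B` and the TVD conditions. -/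
theorem enhanced_mc_properties (A B : ℝ) (hB0 : 0 < B) (hB : B < min 2 (2 * A)) :
    (max 0 (min (2 * A) (min ((B / (A + 1)) * (A + 1)) 2)) = B) ∧
      (∀ θ : ℝ, θ ≤ 0 → max 0 (min (2 * θ) (min ((B / (A + 1)) * (θ + 1)) 2)) = 0) ∧
      (∀ θ : ℝ, 0 ≤ max 0 (min (2 * θ) (min ((B / (A + 1)) * (θ + 1)) 2)) ∧
        max 0 (min (2 * θ) (min ((B / (A + 1)) * (θ + 1)) 2)) ≤ 2) ∧
      (∀ θ : ℝ, 0 < θ →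
        max 0 (min (2 * θ) (min ((B / (A + 1)) * (θ + 1)) 2)) ≤ 2 * θ) := by
  have hA : A + 1 ≠ 0 := by linarith [min_le_right 2 (2 * A)]
  exact ⟨enhancedMC.eq_of_mul_eq _ (div_mul_cancel₀ B hA) hB0.le hB.le,
    fun _ ↦ enhancedMC.eq_zero_of_nonpos _,
    fun θ ↦ ⟨enhancedMC.nonneg _ θ, enhancedMC.le_two _ θ⟩,
    fun _ ↦ enhancedMC.le_two_mul _⟩
end

section
/- Let A, B be reals with 0 < B < min(2, 2A), and define φ_{A,B}(θ) = max(0, min(2θ, (B/(A+1))·(θ+1), 2)). Then for every real θ ≠ 0, φ_{A,B}(θ)/θ = φ_{1/A, B/A}(1/θ); i.e., the enhanced MC limiter is symmetry-preserving. -/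
/-!
Both limiters have the same slope `B / (A + 1)` on their middle branch, because
`(B / A) / (1 / A + 1) = B / (A + 1)`. Dividing `min (2θ, c (θ + 1), 2)` by `θ > 0` gives
`min (2, c (1/θ + 1), 2/θ)`, the same three branches evaluated at `1/θ`; for `θ < 0` both
sides vanish.
-/

/-- `φ_{A,B} = mcLimiter (B / (A + 1))`. -/
def mcLimiter (c θ : ℝ) : ℝ :=
  max 0 (min (2 * θ) (min (c * (θ + 1)) 2))

lemma mcLimiter_of_nonpos (c : ℝ) {θ : ℝ} (hθ : θ ≤ 0) : mcLimiter c θ = 0 :=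
  max_eq_left <| (min_le_left _ _).trans (by linarith)

lemma mcLimiter_div_of_pos (c : ℝ) {θ : ℝ} (hθ : 0 < θ) :
    mcLimiter c θ / θ = mcLimiter c (1 / θ) := by
  have two_branch : 2 * θ / θ = 2 := by field_simp
  have mid_branch : c * (θ + 1) / θ = c * (1 / θ + 1) := by field_simp; ring
  unfold mcLimiter
  rw [← max_div_div_right hθ.le, ← min_div_div_right hθ.le, ← min_div_div_right hθ.le,
    zero_div, two_branch, mid_branch, min_left_comm, min_comm 2, min_left_comm, div_eq_mul_one_div]

lemma mcLimiter_div_eq_one_div (c : ℝ) {θ : ℝ} (hθ : θ ≠ 0) :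
    mcLimiter c θ / θ = mcLimiter c (1 / θ) := by
  rcases hθ.lt_or_gt with hneg | hpos
  · rw [mcLimiter_of_nonpos c hneg.le, mcLimiter_of_nonpos c (one_div_neg.mpr hneg).le, zero_div]
  · exact mcLimiter_div_of_pos c hpos

lemma div_div_one_div_add_one {A : ℝ} (hA : A ≠ 0) (B : ℝ) :
    B / A / (1 / A + 1) = B / (A + 1) := by
  field_simp
  ring

/-- The enhanced MC limiter `φ_{A,B}(θ) = max(0, min(2θ, (B/(A+1))(θ+1), 2))` is
    symmetry-preserving: `φ_{A,B}(θ)/θ = φ_{1/A, B/A}(1/θ)` for all `θ ≠ 0`. -/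
theorem enhanced_mc_symmetry (A B : ℝ) (hB0 : 0 < B) (hB : B < min 2 (2 * A)) :
    ∀ θ : ℝ, θ ≠ 0 →
      (max 0 (min (2 * θ) (min ((B / (A + 1)) * (θ + 1)) 2))) / θ =
        max 0 (min (2 * (1 / θ))
          (min (((B / A) / (1 / A + 1)) * (1 / θ + 1)) 2)) := by
  intro θ hθ
  have hA : 0 < A := by linarith [hB.trans_le (min_le_right _ _)]
  rw [div_div_one_div_add_one hA.ne']
  exact mcLimiter_div_eq_one_div _ hθ
end

section
/- For all reals A, B with 0 < B < min(2, 2A), there exists a positive integer k such that B ≤ 2·(∑_{j=1}^{k} A^j)/(∑_{j=0}^{k} A^j), i.e. B ≤ 2(A^k + A^{k−1} + ⋯ + A)/(A^k + A^{k−1} + ⋯ + A + 1). -/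
/-!
With `T k = 1 + A + ⋯ + A ^ k`, the ratio in question is `(T k - 1) / T k = 1 - (T k)⁻¹`. For
`A ≥ 1` the sums `T k` diverge, and for `0 ≤ A < 1` they increase to `(1 - A)⁻¹`; either way the
ratio tends to `min 1 A`. Since `B` lies strictly below `2 * min 1 A = min 2 (2 * A)`, all large
`k` work.
-/

open Filter Topology Finset

theorem tendsto_inv_geom_sum {A : ℝ} (hA : 0 ≤ A) :
    Tendsto (fun n ↦ (∑ i ∈ range n, A ^ i)⁻¹) atTop (𝓝 (max 0 (1 - A))) := by
  rcases lt_or_ge A 1 with hA1 | hA1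
  · rw [max_eq_right (by linarith)]
    simpa using (hasSum_geometric_of_lt_one hA hA1).tendsto_sum_nat.inv₀ (by positivity)
  · rw [max_eq_left (by linarith)]
    refine tendsto_inv_atTop_zero.comp <|
      tendsto_atTop_mono (fun n ↦ ?_) tendsto_natCast_atTop_atTop
    simpa using card_nsmul_le_sum (range n) (A ^ ·) 1 fun i _ ↦ one_le_pow₀ hA1

theorem tendsto_geom_sum_ratio {A : ℝ} (hA : 0 ≤ A) :
    Tendsto (fun k ↦ (∑ j ∈ Icc 1 k, A ^ j) / ∑ j ∈ range (k + 1), A ^ j) atTop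
      (𝓝 (min 1 A)) := by
  have hsum : ∀ k, ∑ j ∈ Icc 1 k, A ^ j = ∑ j ∈ range (k + 1), A ^ j - 1 := fun k ↦ by
    rw [sum_range_eq_add_Ico _ (by positivity : 0 < k + 1), Ico_add_one_right_eq_Icc]; simp
  have hpos : ∀ k, 0 < ∑ j ∈ range (k + 1), A ^ j := fun k ↦
    sum_pos' (fun i _ ↦ by positivity) ⟨0, by simp⟩
  have hlim := ((tendsto_add_atTop_iff_nat 1).mpr (tendsto_inv_geom_sum hA)).const_sub 1
  rw [← min_sub_sub_left, sub_zero, sub_sub_cancel] at hlim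
  refine hlim.congr fun k ↦ ?_
  rw [hsum, sub_div, div_self (hpos k).ne', one_div]

/-- For admissible limiter parameters `A, B` (with `0 < B < min 2 (2A)`) there is a
    positive integer `k` with `B ≤ 2(A^k + ⋯ + A)/(A^k + ⋯ + A + 1)`. -/
theorem vanLeer_power_exists (A B : ℝ) (hB0 : 0 < B) (hB : B < min 2 (2 * A)) :
    ∃ k : ℕ, 1 ≤ k ∧
      B ≤ 2 * ((∑ j ∈ Finset.Icc 1 k, A ^ j) / (∑ j ∈ Finset.range (k + 1), A ^ j)) := by
  have hA : 0 ≤ A := by linarith [min_le_right 2 (2 * A)]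
  have hlim := (tendsto_geom_sum_ratio hA).const_mul 2
  rw [mul_min_of_nonneg _ _ zero_le_two, mul_one] at hlim
  exact ((eventually_ge_atTop 1).and (hlim.eventually_const_lt hB)).exists.imp
    fun k hk ↦ ⟨hk.1, hk.2.le⟩
end

section
/- Let A > 0, B > 0 be reals and k ≥ 1 an integer with B ≤ 2·S_k(A)/T_k(A), where S_k(x) = ∑_{j=1}^{k} x^j and T_k(x) = ∑_{j=0}^{k} x^j. Define the enhanced van Leer limiter φ(θ) = B·(S_k(θ)/T_k(θ))·(T_k(A)/S_k(A)) for θ ≥ 0 and φ(θ) = 0 for θ < 0. Then φ(A) = B, and for every θ > 0 one has 0 < φ(θ) < 2·min(1, θ); in particular φ satisfies the TVD conditions 0 ≤ φ(θ) ≤ 2 and φ(θ) ≤ 2θ (θ > 0) and the second-order condition φ(A) = B. -/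
/-- `S k x = x + x² + ⋯ + x^k`. -/
noncomputable def vlS (k : ℕ) (x : ℝ) : ℝ := ∑ j ∈ Finset.Icc 1 k, x ^ j

/-- `T k x = 1 + x + ⋯ + x^k`. -/
noncomputable def vlT (k : ℕ) (x : ℝ) : ℝ := ∑ j ∈ Finset.range (k + 1), x ^ j

/-!
Writing `r(θ) = S_k(θ)/T_k(θ)`, the limiter is `φ = c·r` with `c = B·T_k(A)/S_k(A)`, so
`φ(A) = B` is immediate and the hypothesis on `B` says exactly `c ≤ 2`. It remains to see
`r(θ) < min(1, θ)`: the first bound is `T_k = 1 + S_k`, the second is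
`θ·T_k(θ) = S_{k+1}(θ) = S_k(θ) + θ^{k+1}`.
-/

section LimiterSums

variable {k : ℕ} {x : ℝ}

lemma vlS_eq_sum_range (k : ℕ) (x : ℝ) : vlS k x = ∑ i ∈ Finset.range k, x ^ (i + 1) := by
  rw [vlS, ← Finset.Ico_add_one_right_eq_Icc, Finset.sum_Ico_eq_sum_range]
  simp only [add_tsub_cancel_right, add_comm 1]

lemma vlT_eq_one_add_vlS (k : ℕ) (x : ℝ) : vlT k x = 1 + vlS k x := by
  rw [vlT, Finset.sum_range_succ', vlS_eq_sum_range, pow_zero, add_comm]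

lemma vlS_succ_eq_mul_vlT (k : ℕ) (x : ℝ) : vlS (k + 1) x = x * vlT k x := by
  simp only [vlS_eq_sum_range, vlT, Finset.mul_sum, pow_succ']

lemma vlS_succ (k : ℕ) (x : ℝ) : vlS (k + 1) x = vlS k x + x ^ (k + 1) :=
  Finset.sum_Icc_succ_top (by omega) _

lemma vlS_nonneg (hx : 0 ≤ x) : 0 ≤ vlS k x :=
  Finset.sum_nonneg fun _ _ => pow_nonneg hx _

lemma vlS_pos (hk : k ≠ 0) (hx : 0 < x) : 0 < vlS k x := by
  rw [vlS_eq_sum_range]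
  exact Finset.sum_pos (fun _ _ => pow_pos hx _) (Finset.nonempty_range_iff.mpr hk)

lemma vlS_lt_vlT : vlS k x < vlT k x := by
  rw [vlT_eq_one_add_vlS]
  linarith

lemma vlT_pos (hx : 0 ≤ x) : 0 < vlT k x :=
  (vlS_nonneg hx).trans_lt vlS_lt_vlT

lemma vlS_lt_mul_vlT (hx : 0 < x) : vlS k x < x * vlT k x := by
  rw [← vlS_succ_eq_mul_vlT, vlS_succ]
  linarith [pow_pos hx (k + 1)]

lemma vlS_div_vlT_lt_min (hx : 0 < x) : vlS k x / vlT k x < min 1 x := by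
  have hT := vlT_pos (k := k) hx.le
  exact lt_min ((div_lt_one hT).mpr vlS_lt_vlT) ((div_lt_iff₀ hT).mpr (vlS_lt_mul_vlT hx))

end LimiterSums

theorem enhanced_vanLeer_properties_general (A B : ℝ) (k : ℕ) (hA : 0 < A) (hB : 0 < B)
    (hk : 1 ≤ k) (hkB : B ≤ 2 * (vlS k A / vlT k A))
    (φ : ℝ → ℝ)
    (hφ : ∀ θ : ℝ, 0 ≤ θ → φ θ = B * (vlS k θ / vlT k θ) * (vlT k A / vlS k A)) :
    φ A = B ∧ ∀ θ : ℝ, 0 < θ → 0 < φ θ ∧ φ θ < 2 * min 1 θ := by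
  have hSA : 0 < vlS k A := vlS_pos (by omega) hA
  have hTA : 0 < vlT k A := vlT_pos hA.le
  have hscale : B * (vlT k A / vlS k A) ≤ 2 :=
    calc B * (vlT k A / vlS k A) ≤ 2 * (vlS k A / vlT k A) * (vlT k A / vlS k A) := by gcongr
      _ = 2 := by field_simp
  refine ⟨by rw [hφ A hA.le]; field_simp, fun θ hθ => ?_⟩
  have hSθ : 0 < vlS k θ := vlS_pos (by omega) hθ
  have hTθ : 0 < vlT k θ := vlT_pos hθ.le
  rw [hφ θ hθ.le]
  refine ⟨by positivity, ?_⟩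
  calc B * (vlS k θ / vlT k θ) * (vlT k A / vlS k A)
      = B * (vlT k A / vlS k A) * (vlS k θ / vlT k θ) := by ring
    _ ≤ 2 * (vlS k θ / vlT k θ) := by gcongr
    _ < 2 * min 1 θ := by gcongr; exact vlS_div_vlT_lt_min hθ

/-- The enhanced van Leer limiter
    `φ(θ) = B·(S_k(θ)/T_k(θ))·(T_k(A)/S_k(A))` for `θ ≥ 0` (and `0` for `θ < 0`)
    satisfies the second-order condition `φ(A) = B` and the strict TVD bounds
    `0 < φ(θ) < 2 min(1, θ)` for `θ > 0`. -/
theorem enhanced_vanLeer_properties (A B : ℝ) (k : ℕ) (hA : 0 < A) (hB : 0 < B)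
    (hk : 1 ≤ k) (hkB : B ≤ 2 * (vlS k A / vlT k A))
    (φ : ℝ → ℝ)
    (hφ : ∀ θ : ℝ, 0 ≤ θ → φ θ = B * (vlS k θ / vlT k θ) * (vlT k A / vlS k A))
    (hφneg : ∀ θ : ℝ, θ < 0 → φ θ = 0) :
    φ A = B ∧ ∀ θ : ℝ, 0 < θ → 0 < φ θ ∧ φ θ < 2 * min 1 θ :=
  enhanced_vanLeer_properties_general A B k hA hB hk hkB φ hφ
end

section
/- Let A > 0 and θ > 0 be reals, B a real, and k ≥ 1 an integer. With S_k(x) = ∑_{j=1}^{k} x^j and T_k(x) = ∑_{j=0}^{k} x^j, one has [B·(S_k(θ)/T_k(θ))·(T_k(A)/S_k(A))]/θ = (B/A)·(S_k(1/θ)/T_k(1/θ))·(T_k(1/A)/S_k(1/A)); i.e., the enhanced van Leer limiter φ_{A,B}(θ) = B·(S_k(θ)/T_k(θ))·(T_k(A)/S_k(A)) satisfies the symmetry-preserving condition φ_{A,B}(θ)/θ = φ_{1/A, B/A}(1/θ). -/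
/-!
Reversing the order of summation shows that `S_k` and `T_k` are self-reciprocal:
`x^(k+1) S_k(1/x) = S_k(x)` and `x^k T_k(1/x) = T_k(x)`. Hence the ratio `R = S_k/T_k` obeys
`R(1/x) = R(x)/x`, and both sides of the symmetry condition reduce to `B R(θ) / (θ R(A))`.
-/

open Finset

theorem sum_Icc_inv_pow_mul_pow {K : Type*} [Field K] {x : K} (hx : x ≠ 0) (a b : ℕ) :
    (∑ j ∈ Icc a b, x⁻¹ ^ j) * x ^ (a + b) = ∑ j ∈ Icc a b, x ^ j := by
  rw [sum_mul]
  refine sum_nbij' (a + b - ·) (a + b - ·) ?_ ?_ ?_ ?_ ?_ <;> intro j hj <;>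
    simp only [mem_Icc] at hj ⊢
  · omega
  · omega
  · omega
  · omega
  · rw [pow_sub₀ x hx (by omega), inv_pow, mul_comm]

theorem vlS_inv_mul_pow (k : ℕ) {x : ℝ} (hx : x ≠ 0) : vlS k x⁻¹ * x ^ (k + 1) = vlS k x := by
  simpa only [vlS, add_comm 1 k] using sum_Icc_inv_pow_mul_pow hx 1 k

theorem vlT_inv_mul_pow (k : ℕ) {x : ℝ} (hx : x ≠ 0) : vlT k x⁻¹ * x ^ k = vlT k x := by
  simpa only [vlT, Nat.range_succ_eq_Icc_zero, zero_add] using sum_Icc_inv_pow_mul_pow hx 0 k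

theorem vlS_div_vlT_inv (k : ℕ) {x : ℝ} (hx : x ≠ 0) :
    vlS k x⁻¹ / vlT k x⁻¹ = vlS k x / vlT k x / x := by
  rw [← vlS_inv_mul_pow k hx, ← vlT_inv_mul_pow k hx, pow_succ, mul_div_mul_comm,
    mul_div_cancel_left₀ x (pow_ne_zero k hx), mul_div_cancel_right₀ _ hx]

theorem enhanced_vanLeer_symmetry_general (A θ B : ℝ) (hA : 0 < A) (hθ : 0 < θ)
    (k : ℕ) :
    (B * (vlS k θ / vlT k θ) * (vlT k A / vlS k A)) / θ =
      (B / A) * (vlS k (1 / θ) / vlT k (1 / θ)) * (vlT k (1 / A) / vlS k (1 / A)) := by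
  rw [one_div, one_div, vlS_div_vlT_inv k hθ.ne', ← inv_div (vlS k A⁻¹),
    vlS_div_vlT_inv k hA.ne', ← inv_div (vlS k A)]
  field_simp

/-- The enhanced van Leer limiter `φ_{A,B}(θ) = B·(S_k(θ)/T_k(θ))·(T_k(A)/S_k(A))`
    satisfies the symmetry-preserving condition `φ_{A,B}(θ)/θ = φ_{1/A, B/A}(1/θ)`. -/
theorem enhanced_vanLeer_symmetry (A θ B : ℝ) (hA : 0 < A) (hθ : 0 < θ)
    (k : ℕ) (hk : 1 ≤ k) :
    (B * (vlS k θ / vlT k θ) * (vlT k A / vlS k A)) / θ =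
      (B / A) * (vlS k (1 / θ) / vlT k (1 / θ)) * (vlT k (1 / A) / vlS k (1 / A)) :=
  enhanced_vanLeer_symmetry_general A θ B hA hθ k
end

section
/- Let A > 0, B > 0 be reals and k ≥ 2 an integer with B·(1 + (k−1)^{k−1}/k^k) ≤ 2·min(A, 1). Define the enhanced van Albada limiter φ(θ) = B·(θ^k + θ)/(θ^k + A). Then φ(A) = B, and for every θ > 0 one has 0 < φ(θ) ≤ 2·min(1, θ); in particular φ satisfies the TVD conditions 0 ≤ φ(θ) ≤ 2 and φ(θ) ≤ 2θ for θ > 0, and the second-order condition φ(A) = B. -/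
/-!
Both TVD bounds reduce to the single inequality `θ ≤ c θ^k + d` (`θ ≥ 0`), which holds as soon as
`c d^(k-1) ≥ (k-1)^(k-1)/k^k`: this is AM-GM for one copy of `c θ^k` and `k - 1` copies of
`d/(k-1)`, here obtained by rescaling Bernoulli's inequality. For `φ ≤ 2` take `c = 2/B - 1`,
`d = 2A/B`. The bound `φ ≤ 2θ` is the same statement in disguise, because
`φ_{A,B}(θ) = θ · φ_{1/A, B/A}(1/θ)` and the hypotheses are invariant under `(A, B) ↦ (1/A, B/A)`.
-/

noncomputable def vanAlbada (k : ℕ) (A B θ : ℝ) : ℝ := B * (θ ^ k + θ) / (θ ^ k + A)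

theorem mul_le_pow_add_sub_one (n : ℕ) {t : ℝ} (ht : -1 ≤ t) : n * t ≤ t ^ n + (n - 1) := by
  have := one_add_mul_le_pow (a := t - 1) (by linarith) n
  rw [add_sub_cancel] at this
  linarith

theorem le_pow_div_add (n : ℕ) {l θ : ℝ} (hl : 0 < l) (hθ : -l ≤ θ) :
    θ ≤ θ ^ (n + 1) / ((n + 1) * l ^ n) + n * l / (n + 1) := by
  have hbern := mul_le_pow_add_sub_one (n + 1) (t := θ / l) (by rwa [le_div_iff₀ hl, neg_one_mul])
  push_cast at hbern
  rw [← sub_nonneg] at hbern ⊢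
  refine (div_nonneg (mul_nonneg hbern hl.le) (by positivity : (0 : ℝ) ≤ n + 1)).trans_eq ?_
  rw [div_pow, pow_succ l, pow_succ θ]
  field_simp
  ring

theorem le_mul_pow_add (k : ℕ) (hk : 2 ≤ k) {c d θ : ℝ} (hd : 0 < d) (hθ : 0 ≤ θ)
    (h : ((k : ℝ) - 1) ^ (k - 1) / (k : ℝ) ^ k ≤ c * d ^ (k - 1)) :
    θ ≤ c * θ ^ k + d := by
  obtain ⟨n, rfl⟩ : ∃ n, k = n + 1 := ⟨k - 1, by omega⟩
  have hn : (0 : ℝ) < n := by exact_mod_cast (by omega : 0 < n)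
  push_cast at h ⊢
  rw [add_sub_cancel_right] at h
  -- `l` is the common value of the `k` terms in the equality case of AM-GM
  set l := (n + 1) * d / n with hl
  have hcoef : 1 / ((n + 1) * l ^ n) ≤ c := by
    have : 1 / ((n + 1) * l ^ n) = (n ^ n / (n + 1) ^ (n + 1)) / d ^ n := by
      rw [hl, div_pow, mul_pow, pow_succ]
      field_simp
    rwa [this, div_le_iff₀ (by positivity)]
  calc θ ≤ θ ^ (n + 1) / ((n + 1) * l ^ n) + n * l / (n + 1) :=
        le_pow_div_add n (by positivity) (by linarith [show 0 < l by positivity])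
    _ = 1 / ((n + 1) * l ^ n) * θ ^ (n + 1) + d := by rw [hl]; field_simp
    _ ≤ c * θ ^ (n + 1) + d := by gcongr

section vanAlbada

variable {k : ℕ} {A B : ℝ}

theorem vanAlbada_self (hA : 0 < A) : vanAlbada k A B A = B := by
  have : A ^ k + A ≠ 0 := by positivity
  rw [vanAlbada]
  field_simp

theorem vanAlbada_pos (hA : 0 < A) (hB : 0 < B) {θ : ℝ} (hθ : 0 < θ) : 0 < vanAlbada k A B θ := by
  unfold vanAlbada
  positivity

theorem vanAlbada_eq_mul_inv (hA : 0 < A) {θ : ℝ} (hθ : 0 < θ) :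
    vanAlbada k A B θ = θ * vanAlbada k A⁻¹ (B / A) θ⁻¹ := by
  unfold vanAlbada
  have : θ ^ k + A ≠ 0 := by positivity
  simp only [inv_pow]
  field_simp
  ring

variable (hk : 2 ≤ k) (hA : 0 < A) (hB : 0 < B)
  (hB2 : B * (1 + ((k : ℝ) - 1) ^ (k - 1) / (k : ℝ) ^ k) ≤ 2)
  (hB2A : B * (1 + ((k : ℝ) - 1) ^ (k - 1) / (k : ℝ) ^ k) ≤ 2 * A)
include hk hA hB hB2 hB2A

theorem vanAlbada_le_two {θ : ℝ} (hθ : 0 ≤ θ) : vanAlbada k A B θ ≤ 2 := by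
  set ε := ((k : ℝ) - 1) ^ (k - 1) / (k : ℝ) ^ k
  have hε : 0 ≤ ε := by
    have : (1 : ℝ) ≤ k := by exact_mod_cast (by omega : 1 ≤ k)
    positivity
  have hc : ε ≤ (2 - B) / B := by rw [le_div_iff₀ hB]; linarith
  have hd : 1 ≤ 2 * A / B := by rw [le_div_iff₀ hB]; nlinarith
  have hamgm : θ ≤ (2 - B) / B * θ ^ k + 2 * A / B := by
    refine le_mul_pow_add k hk (by linarith) hθ ?_
    calc ε = ε * 1 := (mul_one ε).symm
      _ ≤ (2 - B) / B * (2 * A / B) ^ (k - 1) :=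
        mul_le_mul hc (one_le_pow₀ hd) zero_le_one (hε.trans hc)
  rw [vanAlbada, div_le_iff₀ (by positivity)]
  rw [div_mul_eq_mul_div, ← add_div, le_div_iff₀ hB] at hamgm
  linarith

theorem vanAlbada_le_two_mul {θ : ℝ} (hθ : 0 < θ) : vanAlbada k A B θ ≤ 2 * θ := by
  rw [vanAlbada_eq_mul_inv hA hθ, mul_comm 2]
  gcongr
  refine vanAlbada_le_two hk (by positivity) (by positivity) ?_ ?_ (by positivity)
  · rw [div_mul_eq_mul_div, div_le_iff₀ hA]; exact hB2A
  · rw [div_mul_eq_mul_div, div_le_iff₀ hA, mul_assoc, inv_mul_cancel₀ hA.ne', mul_one]; exact hB2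

end vanAlbada

/-- The enhanced van Albada limiter `φ(θ) = B(θ^k + θ)/(θ^k + A)`, with `k ≥ 2` chosen so
    that `B(1 + (k-1)^(k-1)/k^k) ≤ 2 min(A,1)`, satisfies the second-order condition
    `φ(A) = B` and the TVD bounds `0 < φ(θ) ≤ 2 min(1, θ)` for `θ > 0`. -/
theorem enhanced_vanAlbada_properties (A B : ℝ) (k : ℕ) (hA : 0 < A) (hB : 0 < B)
    (hk : 2 ≤ k)
    (hkB : B * (1 + ((k : ℝ) - 1) ^ (k - 1) / (k : ℝ) ^ k) ≤ 2 * min A 1)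
    (φ : ℝ → ℝ) (hφ : ∀ θ : ℝ, φ θ = B * (θ ^ k + θ) / (θ ^ k + A)) :
    φ A = B ∧ ∀ θ : ℝ, 0 < θ → 0 < φ θ ∧ φ θ ≤ 2 * min 1 θ := by
  obtain rfl : φ = vanAlbada k A B := funext hφ
  have hB2 := hkB.trans (by linarith [min_le_right A 1] : 2 * min A 1 ≤ 2)
  have hB2A := hkB.trans (by linarith [min_le_left A 1] : 2 * min A 1 ≤ 2 * A)
  refine ⟨vanAlbada_self hA, fun θ hθ => ⟨vanAlbada_pos hA hB hθ, ?_⟩⟩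
  rw [mul_min_of_nonneg _ _ zero_le_two, mul_one]
  exact le_min (vanAlbada_le_two hk hA hB hB2 hB2A hθ.le)
    (vanAlbada_le_two_mul hk hA hB hB2 hB2A hθ)
end

section
/- Let A > 0 and θ > 0 be reals, B a real, and k ≥ 1 an integer. Then [B·(θ^k + θ)/(θ^k + A)]/θ = (B/A)·((1/θ)^k + 1/θ)/((1/θ)^k + 1/A); i.e., the enhanced van Albada limiter φ_{A,B}(θ) = B(θ^k + θ)/(θ^k + A) satisfies the symmetry-preserving condition φ_{A,B}(θ)/θ = φ_{1/A, B/A}(1/θ). -/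
def enhancedVanAlbada {K : Type*} [Field K] (k : ℕ) (A B θ : K) : K :=
  B * (θ ^ k + θ) / (θ ^ k + A)

theorem inv_pow_add_inv_eq {K : Type*} [Field K] {θ : K} (hθ : θ ≠ 0) (k : ℕ) :
    θ⁻¹ ^ k + θ⁻¹ = (θ ^ k + θ) / θ ^ (k + 1) := by
  rw [inv_pow]
  field_simp
  ring

theorem enhancedVanAlbada_div_self {K : Type*} [Field K] {A θ : K} (hA : A ≠ 0) (hθ : θ ≠ 0)
    (k : ℕ) (B : K) :
    enhancedVanAlbada k A B θ / θ = enhancedVanAlbada k A⁻¹ (B / A) θ⁻¹ := by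
  -- As a quotient, the denominator is cleared by `div_div_eq_mul_div` with no need for
  -- `θ ^ k + A ≠ 0`: where it vanishes, both sides are `0` by the convention `x / 0 = 0`.
  have hden : θ⁻¹ ^ k + A⁻¹ = (θ ^ k + A) / (θ ^ k * A) := by
    rw [inv_pow]
    field_simp
    ring
  rw [enhancedVanAlbada, enhancedVanAlbada, inv_pow_add_inv_eq hθ, hden, div_div_eq_mul_div]
  field_simp
  ring

theorem enhanced_vanAlbada_symmetry_general (A θ B : ℝ) (hA : 0 < A) (hθ : 0 < θ)
    (k : ℕ) :
    (B * (θ ^ k + θ) / (θ ^ k + A)) / θ =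
      (B / A) * ((1 / θ) ^ k + 1 / θ) / ((1 / θ) ^ k + 1 / A) := by
  simpa only [enhancedVanAlbada, one_div] using enhancedVanAlbada_div_self hA.ne' hθ.ne' k B

/-- The enhanced van Albada limiter `φ_{A,B}(θ) = B(θ^k + θ)/(θ^k + A)` satisfies the
    symmetry-preserving condition `φ_{A,B}(θ)/θ = φ_{1/A, B/A}(1/θ)`. -/
theorem enhanced_vanAlbada_symmetry (A θ B : ℝ) (hA : 0 < A) (hθ : 0 < θ)
    (k : ℕ) (hk : 1 ≤ k) :
    (B * (θ ^ k + θ) / (θ ^ k + A)) / θ =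
      (B / A) * ((1 / θ) ^ k + 1 / θ) / ((1 / θ) ^ k + 1 / A) :=
  enhanced_vanAlbada_symmetry_general A θ B hA hθ k
end

section
/- For every p ∈ {−1, 1} and every q ∈ {0, 1}, there exist reals A, B with 0 < A and 0 < B < 2·min(1, A) such that for all reals α > 0 and β > 0, it is NOT the case that both: (a) for all θ > 0, β·θ^q·(2·α·θ^p)/(1 + α·θ^p) ≤ 2·min(1, θ), and (b) β·A^q·(2·α·A^p)/(1 + α·A^p) = B. In other words, the conventional van Leer limiter applied to an alternative smoothness monitor of the form θ^alt = α·θ^p with limited slope σ = φ^{van Leer}(θ^alt)·β·θ^q·(u_{i+1} − u_i)/Δx_i cannot satisfy both the TVD stability condition and the second-order condition for arbitrary non-uniform grids. -/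
/-!
Take the grid data `A = 1`, `B = 3/2` (cell sizes `1, 3, 1`). For `p = -1, q = 0`
the limiter tends to `2β > 0` as `θ → 0⁺`, and for `p = q = 1` it grows like `βθ` as `θ → ∞`,
so neither is TVD. In the two remaining cases the limiter has the form `θ ↦ 2cθ / (1 + aθ)`;
the TVD bound near `0` forces `c ≤ 1` and near `∞` forces `c ≤ a`, whence its value at `1`
is `2c / (1 + a) ≤ 1 < 3/2`.
-/

noncomputable def altVanLeer (α β : ℝ) (p : ℤ) (q : ℕ) (θ : ℝ) : ℝ :=
  β * θ ^ q * (2 * α * θ ^ p / (1 + α * θ ^ p))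

def IsTVD (ψ : ℝ → ℝ) : Prop :=
  ∀ θ, 0 < θ → ψ θ ≤ 2 * min 1 θ

namespace IsTVD

variable {ψ : ℝ → ℝ} {θ : ℝ}

lemma le_two_mul (h : IsTVD ψ) (hθ : 0 < θ) : ψ θ ≤ 2 * θ :=
  (h θ hθ).trans (by gcongr; exact min_le_right 1 θ)

lemma le_two (h : IsTVD ψ) (hθ : 0 < θ) : ψ θ ≤ 2 :=
  (h θ hθ).trans (by linarith [min_le_left 1 θ])

end IsTVD

noncomputable def rationalLimiter (a c θ : ℝ) : ℝ :=
  2 * c * θ / (1 + a * θ)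

section RationalLimiter

variable {a c : ℝ}

lemma IsTVD.rationalLimiter_coeff_le_one (ha : 0 < a) (h : IsTVD (rationalLimiter a c)) :
    c ≤ 1 := by
  refine le_of_forall_pos_le_add fun ε hε => ?_
  have hθ : 0 < ε / a := by positivity
  have hbound := h.le_two_mul hθ
  rw [rationalLimiter, div_le_iff₀ (by positivity)] at hbound
  have hc : c ≤ 1 + a * (ε / a) :=
    le_of_mul_le_mul_left (by linarith) (by positivity : 0 < 2 * (ε / a))
  rwa [mul_div_cancel₀ ε ha.ne'] at hc

lemma IsTVD.rationalLimiter_coeff_le_scale (ha : 0 < a) (h : IsTVD (rationalLimiter a c)) :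
    c ≤ a := by
  refine le_of_forall_pos_le_add fun ε hε => ?_
  have hθ : 0 < ε⁻¹ := inv_pos.mpr hε
  have hbound := h.le_two hθ
  rw [rationalLimiter, div_le_iff₀ (by positivity)] at hbound
  have hc : (c - a) * ε⁻¹ ≤ 1 := by linarith
  rw [← div_eq_mul_inv, div_le_one hε] at hc
  linarith

lemma IsTVD.rationalLimiter_one_le_one (ha : 0 < a) (h : IsTVD (rationalLimiter a c)) :
    rationalLimiter a c 1 ≤ 1 := by
  have hc₁ := h.rationalLimiter_coeff_le_one ha
  have hca := h.rationalLimiter_coeff_le_scale ha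
  rw [rationalLimiter, div_le_one (by positivity)]
  linarith

end RationalLimiter

section AltVanLeer

variable {α β : ℝ}

lemma altVanLeer_one_zero : altVanLeer α β 1 0 = rationalLimiter α (α * β) := by
  ext θ
  simp only [altVanLeer, rationalLimiter, pow_zero, zpow_one]
  ring

lemma altVanLeer_neg_one_one (hα : α ≠ 0) : altVanLeer α β (-1) 1 = rationalLimiter α⁻¹ β := by
  ext θ
  rcases eq_or_ne θ 0 with rfl | hθ
  · simp [altVanLeer, rationalLimiter]
  · simp only [altVanLeer, rationalLimiter, pow_one, zpow_neg, zpow_one]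
    rw [show 1 + α * θ⁻¹ = α * (1 + α⁻¹ * θ) / θ by field_simp; ring]
    field_simp

lemma altVanLeer_neg_one_zero_apply {θ : ℝ} (hθ : θ ≠ 0) :
    altVanLeer α β (-1) 0 θ = 2 * α * β / (θ + α) := by
  simp only [altVanLeer, pow_zero, mul_one, zpow_neg, zpow_one]
  rw [show 1 + α * θ⁻¹ = (θ + α) / θ by field_simp]
  field_simp

lemma altVanLeer_one_one_apply (θ : ℝ) :
    altVanLeer α β 1 1 θ = 2 * α * β * θ ^ 2 / (1 + α * θ) := by
  simp only [altVanLeer, pow_one, zpow_one]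
  ring

lemma not_isTVD_altVanLeer_neg_one_zero (hα : 0 < α) (hβ : 0 < β) :
    ¬ IsTVD (altVanLeer α β (-1) 0) := by
  intro h
  -- for `θ ≤ α` the limiter is at least `β`, which exceeds `2θ` once `θ ≤ β / 4`
  set θ := min α (β / 4)
  have hθ : 0 < θ := lt_min hα (by positivity)
  have hθα : θ ≤ α := min_le_left _ _
  have hθβ : θ ≤ β / 4 := min_le_right _ _
  have hbound := h.le_two_mul hθ
  rw [altVanLeer_neg_one_zero_apply hθ.ne', div_le_iff₀ (by positivity)] at hbound
  nlinarith [mul_le_mul hθβ (add_le_add_right hθα α) (by positivity) (by positivity)]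

lemma not_isTVD_altVanLeer_one_one (hα : 0 < α) (hβ : 0 < β) :
    ¬ IsTVD (altVanLeer α β 1 1) := by
  intro h
  -- once `αθ ≥ 1` the limiter is at least `βθ`
  set θ := 1 / α + 4 / β
  have hθ : 0 < θ := by positivity
  have hαθ : 1 ≤ α * θ := by
    have : 0 < α * (4 / β) := by positivity
    rw [mul_add, mul_one_div_cancel hα.ne']
    linarith
  have hβθ : 4 ≤ β * θ := by
    have : 0 < β * (1 / α) := by positivity
    rw [mul_add, mul_div_cancel₀ 4 hβ.ne']
    linarith
  have hbound := h.le_two hθ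
  rw [altVanLeer_one_one_apply, div_le_iff₀ (by positivity)] at hbound
  nlinarith [mul_le_mul hαθ hβθ zero_le_four (by positivity)]

end AltVanLeer

/-- The conventional van Leer limiter applied to an alternative smoothness monitor
    `θ^alt = α θ^p` (with limited slope weight `β θ^q`) cannot satisfy both the TVD
    stability condition and the second-order condition for arbitrary non-uniform grids:
    for each `p ∈ {-1, 1}` and `q ∈ {0, 1}`, there are admissible grid parameters
    `A, B` for which no positive `α, β` make both conditions hold. -/
theorem vanLeer_alternative_monitor_fails (p : ℤ) (hp : p = -1 ∨ p = 1)
    (q : ℕ) (hq : q = 0 ∨ q = 1) :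
    ∃ A B : ℝ, 0 < A ∧ 0 < B ∧ B < 2 * min 1 A ∧
      ∀ α β : ℝ, 0 < α → 0 < β →
        ¬ ((∀ θ : ℝ, 0 < θ →
              β * θ ^ q * (2 * α * θ ^ p / (1 + α * θ ^ p)) ≤ 2 * min 1 θ) ∧
            β * A ^ q * (2 * α * A ^ p / (1 + α * A ^ p)) = B) := by
  refine ⟨1, 3 / 2, one_pos, by norm_num, by norm_num, ?_⟩
  rintro α β hα hβ ⟨hTVD, hOrder⟩
  change IsTVD (altVanLeer α β p q) at hTVD
  change altVanLeer α β p q 1 = 3 / 2 at hOrder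
  rcases hp with rfl | rfl <;> rcases hq with rfl | rfl
  · exact not_isTVD_altVanLeer_neg_one_zero hα hβ hTVD
  · rw [altVanLeer_neg_one_one hα.ne'] at hTVD hOrder
    linarith [hTVD.rationalLimiter_one_le_one (inv_pos.mpr hα)]
  · rw [altVanLeer_one_zero] at hTVD hOrder
    linarith [hTVD.rationalLimiter_one_le_one hα]
  · exact not_isTVD_altVanLeer_one_one hα hβ hTVD
end
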